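/- Let a ∈ ℝ, δ > 0, and N ∈ ℕ with a − (nπ)² < −δ for all n > N; let L ∈ ℝ^{N+1}, C = (1, √2, …, √2) ∈ ℝ^{1×(N+1)}, A = diag(a − (0π)², …, a − (Nπ)²), and suppose there is a symmetric positive-definite Q with Q(A+LC) + (A+LC)ᵀQ + 2δQ negative definite. Let (c_n)_{n≥0} be square-summable and let ẽ_n : [0,∞) → ℝ, n ≥ 0, satisfy: ẽ_n(0) = c_n for all n; ẽ_n(t) = c_n e^{(a−(nπ)²)t} for all n > N and t ≥ 0; and ē = (ẽ₀,…,ẽ_N) is continuous on [0,∞) and differentiable on (0,∞) with ē̇(t) = (A+LC)ē(t) + L ζ(t), where ζ(t) = √2 Σ_{n>N} ẽ_n(t). Then there exists M₂ > 0, depending only on a, δ, N, L, Q, such that (Σ_{n≥0} ẽ_n(t)²)^{1/2} ≤ M₂ e^{−δt} (Σ_{n≥0} c_n²)^{1/2} for all t ≥ 0. -/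

import Mathlib

/-!
Along the low-mode ODE `ē' = (A + LC) ē + ζ L`, the Lyapunov function `V = ēᵀ Q ē` satisfies
`V' ≤ -2δ V + K ζ²` by the LMI and Young's inequality. By Cauchy–Schwarz the high modes give
`ζ(t)² ≤ 2 ‖c‖² e^{-2δt} Σ_{n>N} e^{-μ_n t}` with `μ_n = 2((nπ)² - a - δ)`; since `Σ 1/μ_n < ∞`
this forcing is integrable on `(0, ∞)` despite its singularity at `t = 0`, and Grönwall's argument
yields `V(t) ≤ e^{-2δt} (V(0) + const · ‖c‖²)`. The high modes decay like `e^{-δt}` on their own.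
-/

open Matrix Real Set Filter Topology Asymptotics

/-- The diagonal matrix `A = diag(a - (0π)², …, a - (Nπ)²)`. -/
noncomputable def Amat (N : ℕ) (a : ℝ) : Matrix (Fin (N + 1)) (Fin (N + 1)) ℝ :=
  Matrix.diagonal fun n : Fin (N + 1) => a - ((n : ℕ) * Real.pi) ^ 2

/-- The row vector `C = (1, √2, √2, …, √2)`. -/
noncomputable def Cmat (N : ℕ) : Matrix (Fin 1) (Fin (N + 1)) ℝ :=
  Matrix.of fun _ j => if (j : ℕ) = 0 then (1 : ℝ) else Real.sqrt 2

namespace Matrix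

variable {n : Type*} [Fintype n]

theorem isCompact_setOf_dotProduct_self_eq_one : IsCompact {u : n → ℝ | u ⬝ᵥ u = 1} := by
  refine Metric.isCompact_of_isClosed_isBounded
    (isClosed_eq (by fun_prop) continuous_const) ?_
  refine (Metric.isBounded_closedBall (x := 0) (r := 1)).subset fun u hu => ?_
  rw [mem_closedBall_zero_iff, pi_norm_le_iff_of_nonneg zero_le_one]
  intro i
  have hi : u i * u i ≤ u ⬝ᵥ u :=
    Finset.single_le_sum (f := fun j => u j * u j) (fun j _ => mul_self_nonneg _)
      (Finset.mem_univ i)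
  rw [Real.norm_eq_abs, abs_le]
  constructor <;> nlinarith [hu.out]

theorem mul_dotProduct_self_le_dotProduct_mulVec {S : Matrix n n ℝ} {m : ℝ}
    (hm : ∀ u : n → ℝ, u ⬝ᵥ u = 1 → m ≤ u ⬝ᵥ S *ᵥ u) (x : n → ℝ) :
    m * (x ⬝ᵥ x) ≤ x ⬝ᵥ S *ᵥ x := by
  rcases eq_or_ne x 0 with rfl | hx
  · simp
  have hpos : 0 < x ⬝ᵥ x := lt_of_le_of_ne (Fintype.sum_nonneg fun i => mul_self_nonneg (x i))
    (Ne.symm (dotProduct_self_eq_zero.not.2 hx))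
  set r := √(x ⬝ᵥ x)
  have hr : r ^ 2 = x ⬝ᵥ x := sq_sqrt hpos.le
  have hr0 : r ≠ 0 := (sqrt_pos.2 hpos).ne'
  have hu := hm (r⁻¹ • x) (by
    rw [smul_dotProduct, dotProduct_smul, smul_eq_mul, smul_eq_mul, ← hr]; field_simp)
  rw [mulVec_smul, smul_dotProduct, dotProduct_smul, smul_eq_mul, smul_eq_mul] at hu
  rw [← hr]
  calc m * r ^ 2 ≤ (r⁻¹ * (r⁻¹ * (x ⬝ᵥ S *ᵥ x))) * r ^ 2 := by gcongr
    _ = x ⬝ᵥ S *ᵥ x := by field_simp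

theorem PosDef.exists_pos_mul_dotProduct_self_le {S : Matrix n n ℝ} (hS : S.PosDef) :
    ∃ m > 0, ∀ x : n → ℝ, m * (x ⬝ᵥ x) ≤ x ⬝ᵥ S *ᵥ x := by
  by_cases hne : {u : n → ℝ | u ⬝ᵥ u = 1}.Nonempty
  · obtain ⟨u₀, hu₀, hmin⟩ := isCompact_setOf_dotProduct_self_eq_one.exists_isMinOn hne
      (f := fun u => u ⬝ᵥ S *ᵥ u) (by fun_prop)
    refine ⟨u₀ ⬝ᵥ S *ᵥ u₀, hS.dotProduct_mulVec_pos ?_,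
      mul_dotProduct_self_le_dotProduct_mulVec fun u hu => hmin hu⟩
    rintro rfl
    simp at hu₀
  · exact ⟨1, one_pos, mul_dotProduct_self_le_dotProduct_mulVec fun u hu => absurd ⟨u, hu⟩ hne⟩

theorem exists_dotProduct_mulVec_le_mul_dotProduct_self (S : Matrix n n ℝ) :
    ∃ M ≥ 0, ∀ x : n → ℝ, x ⬝ᵥ S *ᵥ x ≤ M * (x ⬝ᵥ x) := by
  obtain ⟨M, hM⟩ := (isCompact_setOf_dotProduct_self_eq_one (n := n)).bddAbove_image
    (f := fun u => u ⬝ᵥ S *ᵥ u) (by fun_prop)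
  refine ⟨max M 0, le_max_right _ _, fun x => ?_⟩
  have h := mul_dotProduct_self_le_dotProduct_mulVec (S := -S) (m := -M)
    (fun u hu => by simpa [neg_mulVec] using hM ⟨u, hu, rfl⟩) x
  simp only [neg_mulVec, dotProduct_neg, neg_mul, neg_le_neg_iff] at h
  have hx : 0 ≤ x ⬝ᵥ x := Fintype.sum_nonneg fun i => mul_self_nonneg (x i)
  exact h.trans (by gcongr; exact le_max_left _ _)

end Matrix

section Calculus

variable {n : Type*} [Fintype n]

theorem HasDerivAt.dotProduct {x y : ℝ → n → ℝ} {x' y' : n → ℝ} {t : ℝ}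
    (hx : HasDerivAt x x' t) (hy : HasDerivAt y y' t) :
    HasDerivAt (fun s => x s ⬝ᵥ y s) (x' ⬝ᵥ y t + x t ⬝ᵥ y') t := by
  have h : HasDerivAt (fun s => ∑ i, x s i * y s i) (∑ i, (x' i * y t i + x t i * y' i)) t :=
    HasDerivAt.fun_sum fun i _ => (hasDerivAt_pi.1 hx i).mul (hasDerivAt_pi.1 hy i)
  rwa [Finset.sum_add_distrib] at h

theorem HasDerivAt.mulVec {x : ℝ → n → ℝ} {x' : n → ℝ} {t : ℝ} (S : Matrix n n ℝ)
    (hx : HasDerivAt x x' t) : HasDerivAt (fun s => S *ᵥ x s) (S *ᵥ x') t :=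
  (S.mulVecLin.toContinuousLinearMap.hasFDerivAt.comp_hasDerivAt t hx :)

theorem sub_le_of_hasDerivAt_le {f g f' g' : ℝ → ℝ} {T C : ℝ} (hT : 0 < T)
    (hf0 : ContinuousWithinAt f (Ioi 0) 0) (hf : ∀ s ∈ Ioc 0 T, HasDerivAt f (f' s) s)
    (hg : ∀ s ∈ Ioc 0 T, HasDerivAt g (g' s) s) (hfg : ∀ s ∈ Ioo 0 T, f' s ≤ g' s)
    (hC : ∀ s ∈ Ioc 0 T, g T - g s ≤ C) : f T - f 0 ≤ C := by
  have hmono : MonotoneOn (fun s => g s - f s) (Ioc 0 T) := by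
    have hdiff : ∀ s ∈ Ioc 0 T, HasDerivAt (fun s => g s - f s) (g' s - f' s) s :=
      fun s hs => (hg s hs).sub (hf s hs)
    refine monotoneOn_of_deriv_nonneg (convex_Ioc 0 T)
      (fun s hs => (hdiff s hs).continuousAt.continuousWithinAt)
      (fun s hs => ?_) (fun s hs => ?_) <;> rw [interior_Ioc] at hs
    · exact (hdiff s (Ioo_subset_Ioc_self hs)).differentiableAt.differentiableWithinAt
    · rw [(hdiff s (Ioo_subset_Ioc_self hs)).deriv, sub_nonneg]
      exact hfg s hs
  have hlim : Tendsto (fun s => f T - f s) (𝓝[>] 0) (𝓝 (f T - f 0)) :=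
    tendsto_const_nhds.sub hf0
  refine le_of_tendsto hlim ?_
  filter_upwards [Ioc_mem_nhdsGT hT] with s hs
  have := hmono hs (right_mem_Ioc.2 hT) hs.2
  linarith [hC s hs]

theorem le_exp_mul_of_hasDerivAt_le {V V' g g' : ℝ → ℝ} {k T C : ℝ} (hT : 0 < T)
    (hV0 : ContinuousWithinAt V (Ioi 0) 0) (hV : ∀ s ∈ Ioc 0 T, HasDerivAt V (V' s) s)
    (hg : ∀ s ∈ Ioc 0 T, HasDerivAt g (g' s) s)
    (hVg : ∀ s ∈ Ioo 0 T, k * V s + V' s ≤ exp (-(k * s)) * g' s)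
    (hC : ∀ s ∈ Ioc 0 T, g T - g s ≤ C) : V T ≤ exp (-(k * T)) * (V 0 + C) := by
  have hexp : ∀ s, HasDerivAt (fun s => exp (k * s)) (exp (k * s) * k) s :=
    fun s => by simpa using ((hasDerivAt_id s).const_mul k).exp
  have hincr := sub_le_of_hasDerivAt_le (f := fun s => exp (k * s) * V s) hT
    ((continuous_exp.comp (continuous_const_mul k)).continuousWithinAt.mul hV0)
    (fun s hs => (hexp s).mul (hV s hs)) hg (fun s hs => ?_) hC
  · simp only [mul_zero, exp_zero, one_mul] at hincr
    calc V T = exp (-(k * T)) * (exp (k * T) * V T) := by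
          rw [← mul_assoc, ← exp_add, neg_add_cancel, exp_zero, one_mul]
      _ ≤ exp (-(k * T)) * (V 0 + C) := by gcongr; linarith
  · calc exp (k * s) * k * V s + exp (k * s) * V' s = exp (k * s) * (k * V s + V' s) := by ring
      _ ≤ exp (k * s) * (exp (-(k * s)) * g' s) := by gcongr; exact hVg s hs
      _ = g' s := by rw [← mul_assoc, ← exp_add, add_neg_cancel, exp_zero, one_mul]

end Calculus

theorem Real.exp_neg_le_inv {y : ℝ} (hy : 0 < y) : exp (-y) ≤ y⁻¹ := by
  rw [le_inv_comm₀ (exp_pos _) hy, exp_neg, inv_inv]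
  linarith [add_one_le_exp y]

theorem one_sub_exp_neg_mul_div_nonneg {m s : ℝ} (hm : 0 < m) (hs : 0 ≤ s) :
    0 ≤ (1 - exp (-(m * s))) / m :=
  div_nonneg (sub_nonneg.2 (exp_le_one_iff.2 (by nlinarith))) hm.le

theorem one_sub_exp_neg_mul_div_le_inv {m s : ℝ} (hm : 0 < m) :
    (1 - exp (-(m * s))) / m ≤ m⁻¹ := by
  rw [div_eq_mul_inv]
  exact mul_le_of_le_one_left (inv_nonneg.2 hm.le) (by linarith [exp_pos (-(m * s))])

section ExpSeries

variable {ι : Type*} {μ : ι → ℝ}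

theorem summable_exp_neg_mul (hμ : ∀ i, 0 < μ i) (hμs : Summable fun i => (μ i)⁻¹) {s : ℝ}
    (hs : 0 < s) : Summable fun i => exp (-(μ i * s)) :=
  (hμs.mul_right s⁻¹).of_nonneg_of_le (fun _ => (exp_pos _).le) fun i => by
    rw [← mul_inv]; exact exp_neg_le_inv (mul_pos (hμ i) hs)

theorem summable_one_sub_exp_neg_mul_div (hμ : ∀ i, 0 < μ i)
    (hμs : Summable fun i => (μ i)⁻¹) {s : ℝ} (hs : 0 ≤ s) :
    Summable fun i => (1 - exp (-(μ i * s))) / μ i :=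
  hμs.of_nonneg_of_le (fun i => one_sub_exp_neg_mul_div_nonneg (hμ i) hs)
    fun i => one_sub_exp_neg_mul_div_le_inv (hμ i)

theorem tsum_one_sub_exp_neg_mul_div_nonneg (hμ : ∀ i, 0 < μ i) {s : ℝ} (hs : 0 ≤ s) :
    0 ≤ ∑' i, (1 - exp (-(μ i * s))) / μ i :=
  tsum_nonneg fun i => one_sub_exp_neg_mul_div_nonneg (hμ i) hs

theorem tsum_one_sub_exp_neg_mul_div_le (hμ : ∀ i, 0 < μ i)
    (hμs : Summable fun i => (μ i)⁻¹) {s : ℝ} (hs : 0 ≤ s) :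
    ∑' i, (1 - exp (-(μ i * s))) / μ i ≤ ∑' i, (μ i)⁻¹ :=
  (summable_one_sub_exp_neg_mul_div hμ hμs hs).tsum_le_tsum
    (fun i => one_sub_exp_neg_mul_div_le_inv (hμ i)) hμs

theorem hasDerivAt_tsum_one_sub_exp_neg_mul_div (hμ : ∀ i, 0 < μ i)
    (hμs : Summable fun i => (μ i)⁻¹) {t : ℝ} (ht : 0 < t) :
    HasDerivAt (fun s => ∑' i, (1 - exp (-(μ i * s))) / μ i) (∑' i, exp (-(μ i * t))) t := by
  have hderiv : ∀ i s, HasDerivAt (fun s => (1 - exp (-(μ i * s))) / μ i) (exp (-(μ i * s))) s :=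
    fun i s => by
      have hlin : HasDerivAt (fun s => -(μ i * s)) (-(μ i)) s := by
        simpa using (hasDerivAt_id s).const_mul (-(μ i))
      refine ((hlin.exp.const_sub 1).div_const (μ i)).congr_deriv ?_
      field_simp [(hμ i).ne']
  refine hasDerivAt_tsum_of_isPreconnected (summable_exp_neg_mul hμ hμs (half_pos ht))
    isOpen_Ioi isPreconnected_Ioi (fun i s _ => hderiv i s) (fun i s hs => ?_)
    (half_lt_self ht) (summable_one_sub_exp_neg_mul_div hμ hμs ht.le) (half_lt_self ht)
  rw [norm_of_nonneg (exp_pos _).le, exp_le_exp, neg_le_neg_iff]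
  exact mul_le_mul_of_nonneg_left (le_of_lt hs) (hμ i).le

end ExpSeries

theorem summable_inv_mul_sq_add {c : ℝ} (hc : 0 < c) (b : ℝ) :
    Summable fun n : ℕ => (c * n ^ 2 + b)⁻¹ := by
  have hlim : Tendsto (fun n : ℕ => c * (n : ℝ) ^ 2) atTop atTop :=
    (tendsto_pow_atTop two_ne_zero).comp tendsto_natCast_atTop_atTop |>.const_mul_atTop hc
  have hequiv : (fun n : ℕ => c * (n : ℝ) ^ 2 + b) ~[atTop] fun n => c * (n : ℝ) ^ 2 :=
    IsEquivalent.refl.add_isLittleO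
      (isLittleO_const_left.2 (Or.inr (tendsto_norm_atTop_atTop.comp hlim)))
  refine summable_of_isBigO_nat ?_ hequiv.inv.isBigO
  show Summable fun n : ℕ => (c * (n : ℝ) ^ 2)⁻¹
  simpa only [mul_inv] using (summable_nat_pow_inv.2 one_lt_two).mul_left c⁻¹

theorem sq_tsum_mul_le {ι : Type*} {f g : ι → ℝ} (hf : Summable fun i => f i ^ 2)
    (hg : Summable fun i => g i ^ 2) :
    (∑' i, f i * g i) ^ 2 ≤ (∑' i, f i ^ 2) * ∑' i, g i ^ 2 := by
  have habs : ∀ h : ι → ℝ, (fun i => |h i| ^ (2 : ℝ)) = fun i => h i ^ 2 := fun h => by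
    ext i; rw [rpow_two, sq_abs]
  obtain ⟨hsum, hle⟩ := summable_and_inner_le_Lp_mul_Lq_tsum_of_nonneg HolderConjugate.two_two
    (fun i => abs_nonneg (f i)) (fun i => abs_nonneg (g i)) (habs f ▸ hf) (habs g ▸ hg)
  rw [habs f, habs g, ← sqrt_eq_rpow, ← sqrt_eq_rpow, ← sqrt_mul (tsum_nonneg fun i => sq_nonneg _)]
    at hle
  have hnorm : |∑' i, f i * g i| ≤ ∑' i, |f i| * |g i| := by
    simpa only [Real.norm_eq_abs, abs_mul] using norm_tsum_le_tsum_norm (f := fun i => f i * g i)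
      (by simpa only [Real.norm_eq_abs, abs_mul] using hsum)
  calc (∑' i, f i * g i) ^ 2 = |∑' i, f i * g i| ^ 2 := (sq_abs _).symm
    _ ≤ _ := by gcongr; exact hnorm.trans hle
    _ = _ := sq_sqrt (mul_nonneg (tsum_nonneg fun i => sq_nonneg _)
      (tsum_nonneg fun i => sq_nonneg _))

theorem tsum_sq_le_of_sum_range_le {f c : ℕ → ℝ} {N : ℕ} {r A : ℝ}
    (hc : Summable fun n => c n ^ 2) (hr : 0 ≤ r)
    (hhead : ∑ i ∈ Finset.range (N + 1), f i ^ 2 ≤ r * A * ∑' n, c n ^ 2)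
    (htail : ∀ n, N < n → f n ^ 2 ≤ r * c n ^ 2) :
    ∑' n, f n ^ 2 ≤ r * (A + 1) * ∑' n, c n ^ 2 := by
  have hc' := (summable_nat_add_iff (f := fun n => c n ^ 2) (N + 1)).2 hc
  have hf' : Summable fun n => f (n + (N + 1)) ^ 2 :=
    (hc'.mul_left r).of_nonneg_of_le (fun _ => sq_nonneg _) fun n => htail _ (by omega)
  have hctail : ∑' n, c (n + (N + 1)) ^ 2 ≤ ∑' n, c n ^ 2 := by
    rw [← hc.sum_add_tsum_nat_add (N + 1)]
    linarith [Finset.sum_nonneg fun i (_ : i ∈ Finset.range (N + 1)) => sq_nonneg (c i)]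
  have hftail : ∑' n, f (n + (N + 1)) ^ 2 ≤ r * ∑' n, c n ^ 2 :=
    calc ∑' n, f (n + (N + 1)) ^ 2 ≤ ∑' n, r * c (n + (N + 1)) ^ 2 :=
          hf'.tsum_le_tsum (fun n => htail _ (by omega)) (hc'.mul_left r)
      _ ≤ r * ∑' n, c n ^ 2 := by rw [tsum_mul_left]; gcongr
  rw [← ((summable_nat_add_iff (f := fun n => f n ^ 2) (N + 1)).1 hf').sum_add_tsum_nat_add (N + 1)]
  linarith

section Lyapunov

variable {n : Type*} [Fintype n]

theorem two_mul_mul_dotProduct_le (x q : n → ℝ) (z : ℝ) {ε : ℝ} (hε : 0 < ε) :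
    2 * z * (q ⬝ᵥ x) ≤ ε * (x ⬝ᵥ x) + (q ⬝ᵥ q) / ε * z ^ 2 := by
  have h : 0 ≤ (ε • x - z • q) ⬝ᵥ (ε • x - z • q) :=
    Fintype.sum_nonneg fun i => mul_self_nonneg _
  simp only [sub_dotProduct, dotProduct_sub, smul_dotProduct, dotProduct_smul, smul_eq_mul,
    dotProduct_comm x q] at h
  rw [← sub_nonneg]
  have : ε * (x ⬝ᵥ x) + (q ⬝ᵥ q) / ε * z ^ 2 - 2 * z * (q ⬝ᵥ x)
      = (ε * (ε * (x ⬝ᵥ x) - z * (q ⬝ᵥ x)) - z * (ε * (q ⬝ᵥ x) - z * (q ⬝ᵥ q))) / ε := by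
    field_simp; ring
  rw [this]
  exact div_nonneg h hε.le

variable {M Q : Matrix n n ℝ} {δ ε : ℝ}

theorem lyapunov_deriv_le (hQ : Q.IsSymm) (hε : 0 < ε)
    (hR : ∀ x : n → ℝ, ε * (x ⬝ᵥ x) ≤ x ⬝ᵥ (-(Q * M + Mᵀ * Q + (2 * δ) • Q)) *ᵥ x)
    (l x : n → ℝ) (z : ℝ) :
    (M *ᵥ x + z • l) ⬝ᵥ Q *ᵥ x + x ⬝ᵥ Q *ᵥ (M *ᵥ x + z • l)
      ≤ -(2 * δ) * (x ⬝ᵥ Q *ᵥ x) + (Q *ᵥ l ⬝ᵥ Q *ᵥ l) / ε * z ^ 2 := by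
  have hsym : ∀ y : n → ℝ, y ⬝ᵥ Q *ᵥ x = x ⬝ᵥ Q *ᵥ y := fun y => by
    rw [dotProduct_mulVec, ← mulVec_transpose, hQ.eq, dotProduct_comm]
  have hMT : x ⬝ᵥ Mᵀ *ᵥ Q *ᵥ x = x ⬝ᵥ Q *ᵥ M *ᵥ x := by
    rw [dotProduct_mulVec x Mᵀ, vecMul_transpose, hsym]
  have hRx := hR x
  have hyoung := two_mul_mul_dotProduct_le x (Q *ᵥ l) z hε
  simp only [neg_mulVec, add_mulVec, smul_mulVec, ← mulVec_mulVec, dotProduct_neg,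
    dotProduct_add, dotProduct_smul, smul_eq_mul, hMT] at hRx
  rw [hsym, mulVec_add, mulVec_smul, dotProduct_add, dotProduct_smul, smul_eq_mul,
    dotProduct_comm x (Q *ᵥ l)]
  linarith

theorem lyapunov_le_exp_mul {ι : Type*} (hQ : Q.IsSymm) {B : ℝ} (hε : 0 < ε)
    (hR : ∀ x : n → ℝ, ε * (x ⬝ᵥ x) ≤ x ⬝ᵥ (-(Q * M + Mᵀ * Q + (2 * δ) • Q)) *ᵥ x)
    {μ : ι → ℝ} (hμ : ∀ i, 0 < μ i) (hμs : Summable fun i => (μ i)⁻¹) (hB : 0 ≤ B)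
    {l : n → ℝ} {x : ℝ → n → ℝ} {z : ℝ → ℝ} (hcont : ContinuousWithinAt x (Ioi 0) 0)
    (hx : ∀ t > 0, HasDerivAt x (M *ᵥ x t + z t • l) t)
    (hz : ∀ t > 0, z t ^ 2 ≤ B * exp (-(2 * δ * t)) * ∑' i, exp (-(μ i * t)))
    {t : ℝ} (ht : 0 ≤ t) :
    x t ⬝ᵥ Q *ᵥ x t ≤ exp (-(2 * δ * t))
      * (x 0 ⬝ᵥ Q *ᵥ x 0 + (Q *ᵥ l ⬝ᵥ Q *ᵥ l) / ε * B * ∑' i, (μ i)⁻¹) := by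
  set K := (Q *ᵥ l ⬝ᵥ Q *ᵥ l) / ε
  have hK : 0 ≤ K := div_nonneg (Fintype.sum_nonneg fun i => mul_self_nonneg _) hε.le
  have hS : 0 ≤ ∑' i, (μ i)⁻¹ := tsum_nonneg fun i => (inv_pos.2 (hμ i)).le
  rcases ht.eq_or_lt with rfl | ht
  · simp only [mul_zero, neg_zero, exp_zero, one_mul]
    nlinarith [mul_nonneg (mul_nonneg hK hB) hS]
  refine le_exp_mul_of_hasDerivAt_le (V := fun s => x s ⬝ᵥ Q *ᵥ x s)
    (g := fun s => K * B * ∑' i, (1 - exp (-(μ i * s))) / μ i) ht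
    ((show Continuous fun v : n → ℝ => v ⬝ᵥ Q *ᵥ v by fun_prop).continuousAt.comp_continuousWithinAt
      hcont)
    (fun s hs => (hx s hs.1).dotProduct ((hx s hs.1).mulVec Q))
    (fun s hs => (hasDerivAt_tsum_one_sub_exp_neg_mul_div hμ hμs hs.1).const_mul (K * B))
    (fun s hs => ?_) (fun s hs => ?_)
  · calc 2 * δ * (x s ⬝ᵥ Q *ᵥ x s) + ((M *ᵥ x s + z s • l) ⬝ᵥ Q *ᵥ x s
          + x s ⬝ᵥ Q *ᵥ (M *ᵥ x s + z s • l)) ≤ K * z s ^ 2 := by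
          linarith [lyapunov_deriv_le hQ hε hR l (x s) (z s)]
      _ ≤ K * (B * exp (-(2 * δ * s)) * ∑' i, exp (-(μ i * s))) := by gcongr; exact hz s hs.1
      _ = exp (-(2 * δ * s)) * (K * B * ∑' i, exp (-(μ i * s))) := by ring
  · rw [← mul_sub]
    gcongr
    linarith [tsum_one_sub_exp_neg_mul_div_le hμ hμs ht.le,
      tsum_one_sub_exp_neg_mul_div_nonneg hμ hs.1.le]

theorem exists_forall_dotProduct_self_le_exp_mul {ι : Type*} (hQ : Q.PosDef)
    (hR : (-(Q * M + Mᵀ * Q + (2 * δ) • Q)).PosDef) {μ : ι → ℝ} (hμ : ∀ i, 0 < μ i)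
    (hμs : Summable fun i => (μ i)⁻¹) (l : n → ℝ) :
    ∃ A ≥ 0, ∀ (x : ℝ → n → ℝ) (z : ℝ → ℝ) (C : ℝ), 0 ≤ C → x 0 ⬝ᵥ x 0 ≤ C →
      ContinuousWithinAt x (Ioi 0) 0 → (∀ t > 0, HasDerivAt x (M *ᵥ x t + z t • l) t) →
      (∀ t > 0, z t ^ 2 ≤ C * exp (-(2 * δ * t)) * ∑' i, exp (-(μ i * t))) →
      ∀ t ≥ 0, x t ⬝ᵥ x t ≤ exp (-(2 * δ * t)) * A * C := by
  obtain ⟨m, hm, hQ_lower⟩ := hQ.exists_pos_mul_dotProduct_self_le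
  obtain ⟨b, hb, hQ_upper⟩ := Q.exists_dotProduct_mulVec_le_mul_dotProduct_self
  obtain ⟨ε, hε, hεR⟩ := hR.exists_pos_mul_dotProduct_self_le
  set K := (Q *ᵥ l ⬝ᵥ Q *ᵥ l) / ε
  have hK : 0 ≤ K := div_nonneg (Fintype.sum_nonneg fun i => mul_self_nonneg _) hε.le
  have hS : 0 ≤ ∑' i, (μ i)⁻¹ := tsum_nonneg fun i => (inv_pos.2 (hμ i)).le
  refine ⟨(b + K * ∑' i, (μ i)⁻¹) / m, by positivity, fun x z C hC hinit hcont hx hz t ht => ?_⟩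
  refine le_of_mul_le_mul_left ?_ hm
  calc m * (x t ⬝ᵥ x t) ≤ x t ⬝ᵥ Q *ᵥ x t := hQ_lower _
    _ ≤ exp (-(2 * δ * t)) * (x 0 ⬝ᵥ Q *ᵥ x 0 + K * C * ∑' i, (μ i)⁻¹) :=
        lyapunov_le_exp_mul (isHermitian_iff_isSymm.1 hQ.isHermitian) hε hεR hμ hμs hC hcont hx
          hz ht
    _ ≤ exp (-(2 * δ * t)) * (b * C + K * C * ∑' i, (μ i)⁻¹) := by
        gcongr; exact (hQ_upper _).trans (by gcongr)
    _ = m * (exp (-(2 * δ * t)) * ((b + K * ∑' i, (μ i)⁻¹) / m) * C) := by field_simp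

end Lyapunov

theorem sq_mul_exp_le {c lam δ t : ℝ} (hlam : lam ≤ -δ) (ht : 0 ≤ t) :
    (c * exp (lam * t)) ^ 2 ≤ exp (-(2 * δ * t)) * c ^ 2 := by
  rw [mul_pow, ← exp_nat_mul, mul_comm]
  gcongr
  push_cast
  nlinarith

section HeatModes

variable {a δ : ℝ} {N : ℕ}

/-- Chosen so that `exp (2 (a - (nπ)²) t) = exp (-2δt) * exp (-tailRate a δ N n * t)`. -/
noncomputable def tailRate (a δ : ℝ) (N : ℕ) (n : {n : ℕ // N < n}) : ℝ :=
  2 * (((n : ℕ) * π) ^ 2 - a - δ)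

theorem tailRate_pos (hN : ∀ n : ℕ, N < n → a - (n * π) ^ 2 < -δ) (n : {n : ℕ // N < n}) :
    0 < tailRate a δ N n := by
  have := hN n n.2
  unfold tailRate
  linarith

theorem summable_inv_tailRate (a δ : ℝ) (N : ℕ) :
    Summable fun n => (tailRate a δ N n)⁻¹ := by
  refine ((summable_inv_mul_sq_add (c := 2 * π ^ 2) (by positivity) (-2 * (a + δ))).subtype
    {n : ℕ | N < n}).congr fun n => ?_
  simp only [Function.comp_apply, tailRate]
  ring_nf

theorem sq_tail_output_le (hN : ∀ n : ℕ, N < n → a - (n * π) ^ 2 < -δ) {c : ℕ → ℝ}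
    {e : ℕ → ℝ → ℝ} (hc : Summable fun n => c n ^ 2)
    (he : ∀ n, N < n → ∀ t, 0 ≤ t → e n t = c n * exp ((a - (n * π) ^ 2) * t)) {t : ℝ}
    (ht : 0 < t) :
    (√2 * ∑' n : {n : ℕ // N < n}, e n t) ^ 2
      ≤ 2 * (∑' n, c n ^ 2) * exp (-(2 * δ * t)) * ∑' n, exp (-(tailRate a δ N n * t)) := by
  have hsplit : ∀ n : {n : ℕ // N < n}, exp ((a - ((n : ℕ) * π) ^ 2) * t) ^ 2
      = exp (-(2 * δ * t)) * exp (-(tailRate a δ N n * t)) := fun n => by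
    rw [← exp_nat_mul, ← exp_add, tailRate]; ring_nf
  have hcs := sq_tsum_mul_le (f := fun n : {n : ℕ // N < n} => c n)
    (g := fun n : {n : ℕ // N < n} => exp ((a - ((n : ℕ) * π) ^ 2) * t))
    (hc.subtype {n : ℕ | N < n})
    (by simpa only [hsplit] using (summable_exp_neg_mul (tailRate_pos hN)
      (summable_inv_tailRate a δ N) ht).mul_left (exp (-(2 * δ * t))))
  rw [tsum_congr fun n : {n : ℕ // N < n} => he n n.2 t ht.le, mul_pow, sq_sqrt zero_le_two,
    mul_assoc 2, mul_assoc 2]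
  gcongr
  refine hcs.trans ?_
  rw [tsum_congr hsplit, tsum_mul_left, ← mul_assoc]
  gcongr
  exact hc.tsum_subtype_le _ _ fun n => sq_nonneg _

end HeatModes

theorem stmt10_general (a δ : ℝ) (N : ℕ)
    (hN : ∀ n : ℕ, N < n → a - (n * Real.pi) ^ 2 < -δ)
    (L : Matrix (Fin (N + 1)) (Fin 1) ℝ)
    (Q : Matrix (Fin (N + 1)) (Fin (N + 1)) ℝ) (hQ : Q.PosDef)
    (hLyap : (-(Q * (Amat N a + L * Cmat N) + (Amat N a + L * Cmat N)ᵀ * Q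
      + (2 * δ) • Q)).PosDef) :
    ∃ M₂ > 0, ∀ (c : ℕ → ℝ) (e : ℕ → ℝ → ℝ),
      Summable (fun n => (c n) ^ 2) →
      (∀ n, e n 0 = c n) →
      (∀ n, N < n → ∀ t, 0 ≤ t → e n t = c n * Real.exp ((a - (n * Real.pi) ^ 2) * t)) →
      ContinuousOn (fun t => (fun i : Fin (N + 1) => e i t)) (Set.Ici 0) →
      (∀ t, 0 < t → HasDerivAt (fun s => (fun i : Fin (N + 1) => e i s))
        ((Amat N a + L * Cmat N).mulVec (fun i : Fin (N + 1) => e i t)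
          + (Real.sqrt 2 * ∑' n : {n : ℕ // N < n}, e n t) • (fun i => L i 0)) t) →
      ∀ t, 0 ≤ t →
        Real.sqrt (∑' n, (e n t) ^ 2)
          ≤ M₂ * Real.exp (-δ * t) * Real.sqrt (∑' n, (c n) ^ 2) := by
  obtain ⟨A, hA, hlow⟩ := exists_forall_dotProduct_self_le_exp_mul hQ hLyap (tailRate_pos hN)
    (summable_inv_tailRate a δ N) fun i => L i 0
  refine ⟨√(2 * A + 1), by positivity, fun c e hc he0 he hcont hderiv t ht => ?_⟩
  set cN := ∑' n, c n ^ 2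
  have hsq : ∀ s, (fun i : Fin (N + 1) => e i s) ⬝ᵥ (fun i => e i s)
      = ∑ i ∈ Finset.range (N + 1), e i s ^ 2 := fun s => by
    rw [← Fin.sum_univ_eq_sum_range (fun i => e i s ^ 2)]
    simp only [dotProduct, sq]
  have hinit : ∑ i ∈ Finset.range (N + 1), e i 0 ^ 2 ≤ 2 * cN := by
    have := hc.sum_le_tsum (Finset.range (N + 1)) fun _ _ => sq_nonneg _
    simp only [he0]
    linarith [(tsum_nonneg fun n => sq_nonneg (c n) : 0 ≤ cN)]
  have hhead : ∑ i ∈ Finset.range (N + 1), e i t ^ 2 ≤ exp (-(2 * δ * t)) * (2 * A) * cN := by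
    have := hlow _ _ (2 * cN) (by positivity) ((hsq 0).trans_le hinit)
      ((hcont 0 self_mem_Ici).mono Ioi_subset_Ici_self) hderiv
      (fun s hs => sq_tail_output_le hN hc he hs) t ht
    rw [hsq] at this
    linarith
  have htot := tsum_sq_le_of_sum_range_le hc (exp_pos _).le hhead fun n hn => by
    rw [he n hn t ht]; exact sq_mul_exp_le (hN n hn).le ht
  calc √(∑' n, e n t ^ 2) ≤ √(exp (-(2 * δ * t)) * (2 * A + 1) * cN) := sqrt_le_sqrt htot
    _ = √(2 * A + 1) * exp (-δ * t) * √cN := by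
      rw [sqrt_mul (by positivity), sqrt_mul (exp_pos _).le,
        show exp (-(2 * δ * t)) = exp (-δ * t) ^ 2 by rw [← exp_nat_mul]; ring_nf,
        sqrt_sq (exp_pos _).le]
      ring

/-- modal formulation of the exponential convergence of the state
observer error.  Given the spectral gap `a - (nπ)² < -δ` for `n > N` and the Lyapunov
LMI for `A + LC`, any modal solution `(ẽₙ)` (high modes decaying freely, low modes
solving `ē̇ = (A+LC)ē + Lζ` with `ζ = √2 Σ_{n>N} ẽₙ`) satisfies
`(Σₙ ẽₙ(t)²)^{1/2} ≤ M₂ e^{-δt} (Σₙ cₙ²)^{1/2}` with `M₂` depending only on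
`a, δ, N, L, Q`. -/
theorem stmt10 (a δ : ℝ) (N : ℕ) (hδ : 0 < δ)
    (hN : ∀ n : ℕ, N < n → a - (n * Real.pi) ^ 2 < -δ)
    (L : Matrix (Fin (N + 1)) (Fin 1) ℝ)
    (Q : Matrix (Fin (N + 1)) (Fin (N + 1)) ℝ) (hQ : Q.PosDef)
    (hLyap : (-(Q * (Amat N a + L * Cmat N) + (Amat N a + L * Cmat N)ᵀ * Q
      + (2 * δ) • Q)).PosDef) :
    ∃ M₂ > 0, ∀ (c : ℕ → ℝ) (e : ℕ → ℝ → ℝ),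
      Summable (fun n => (c n) ^ 2) →
      (∀ n, e n 0 = c n) →
      (∀ n, N < n → ∀ t, 0 ≤ t → e n t = c n * Real.exp ((a - (n * Real.pi) ^ 2) * t)) →
      ContinuousOn (fun t => (fun i : Fin (N + 1) => e i t)) (Set.Ici 0) →
      (∀ t, 0 < t → HasDerivAt (fun s => (fun i : Fin (N + 1) => e i s))
        ((Amat N a + L * Cmat N).mulVec (fun i : Fin (N + 1) => e i t)
          + (Real.sqrt 2 * ∑' n : {n : ℕ // N < n}, e n t) • (fun i => L i 0)) t) →
      ∀ t, 0 ≤ t →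
        Real.sqrt (∑' n, (e n t) ^ 2)
          ≤ M₂ * Real.exp (-δ * t) * Real.sqrt (∑' n, (c n) ^ 2) :=
  stmt10_general a δ N hN L Q hQ hLyap
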